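/- For every p > 0 one has, at the point x = ap/2, the lower bound p·∂²φ/∂x²(ap/2, p) ≥ p·υ·e^{−2υ}; in particular, setting p₁ = υ⁻¹·e^{2υ}, one has p₁·∂²φ/∂x²(a p₁/2, p₁) ≥ 1 and p·∂²φ/∂x²(a p/2, p) > 1 for every p > p₁. -/

import Mathlib

/-!
`∂²φ/∂x²` is the variance of `n` under the weights `wₙ = υⁿ/n! · exp (x n - (a p / 2) n²)`.
At `x = a p / 2` these weights are `υⁿ/n! · exp (-(a p / 2) n (n - 1)) ≤ υⁿ/n!`, equal to `1`
and `υ` at `n = 0, 1`. So the partition function `Z` is at most `exp υ`, while for the moments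
`Mₖ = Σ nᵏ wₙ` Cauchy–Schwarz over the terms `n ≥ 1` gives `M₁² ≤ (Z - 1) M₂`, hence
`Z M₂ - M₁² ≥ M₂ ≥ υ`. Dividing by `Z²` gives `∂²φ/∂x² ≥ υ exp (-2υ)`, and
`p₁ υ exp (-2υ) = 1`.
-/

/-- The function `φ(x,p) = ln Σ_{n≥0} (υⁿ/n!)·exp(xn − (ap/2)n²)`. -/
noncomputable def phi (υ a x p : ℝ) : ℝ :=
  Real.log (∑' n : ℕ, (υ ^ n / (Nat.factorial n : ℝ)) *
    Real.exp (x * n - (a * p / 2) * (n : ℝ) ^ 2))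

open Real
open scoped Nat

noncomputable def moment (A : ℕ → ℝ) (k : ℕ) : ℝ := ∑' n : ℕ, (n : ℝ) ^ k * A n

noncomputable def expTilt (c : ℕ → ℝ) (x : ℝ) (n : ℕ) : ℝ := c n * exp (x * n)

section ExpTilt

variable {c : ℕ → ℝ}

lemma expTilt_nonneg (hc : ∀ n, 0 ≤ c n) (x : ℝ) (n : ℕ) : 0 ≤ expTilt c x n :=
  mul_nonneg (hc n) (exp_pos _).le

/-- Polynomial weights are absorbed by shifting the tilt, since `n ^ k ≤ k! * exp n`. -/
lemma summable_pow_mul_expTilt (hc : ∀ n, 0 ≤ c n) (hs : ∀ x, Summable (expTilt c x))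
    (k : ℕ) (x : ℝ) : Summable fun n : ℕ => (n : ℝ) ^ k * expTilt c x n := by
  refine ((hs (x + 1)).mul_left (k ! : ℝ)).of_nonneg_of_le
    (fun n => mul_nonneg (by positivity) (expTilt_nonneg hc x n)) (fun n => ?_)
  have hpow : (n : ℝ) ^ k ≤ k ! * exp n := by
    have := Real.pow_div_factorial_le_exp (n : ℝ) (Nat.cast_nonneg n) k
    rwa [div_le_iff₀ (by positivity), mul_comm] at this
  calc (n : ℝ) ^ k * expTilt c x n ≤ k ! * exp n * expTilt c x n :=
        mul_le_mul_of_nonneg_right hpow (expTilt_nonneg hc x n)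
    _ = k ! * expTilt c (x + 1) n := by
        simp only [expTilt, add_mul, one_mul, exp_add]; ring

lemma hasDerivAt_moment_expTilt (hc : ∀ n, 0 ≤ c n) (hs : ∀ x, Summable (expTilt c x))
    (k : ℕ) (x : ℝ) :
    HasDerivAt (fun y => moment (expTilt c y) k) (moment (expTilt c x) (k + 1)) x := by
  have hterm (n : ℕ) (y : ℝ) : HasDerivAt (fun z => (n : ℝ) ^ k * expTilt c z n)
      ((n : ℝ) ^ (k + 1) * expTilt c y n) y := by
    unfold expTilt
    exact (((hasDerivAt_mul_const (n : ℝ)).exp.const_mul (c n)).const_mul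
      ((n : ℝ) ^ k)).congr_deriv (by ring)
  refine hasDerivAt_tsum_of_isPreconnected (summable_pow_mul_expTilt hc hs (k + 1) (x + 1))
    isOpen_Iio (convex_Iio _).isPreconnected (fun n y _ => hterm n y) (fun n y hy => ?_)
    (show x ∈ Set.Iio (x + 1) by simp) (summable_pow_mul_expTilt hc hs k x)
    (show x ∈ Set.Iio (x + 1) by simp)
  rw [norm_of_nonneg (mul_nonneg (by positivity) (expTilt_nonneg hc y n))]
  gcongr
  unfold expTilt
  gcongr
  · exact hc n
  · exact le_of_lt hy

end ExpTilt

section Moment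

variable {A : ℕ → ℝ}

lemma moment_zero (A : ℕ → ℝ) : moment A 0 = ∑' n, A n := by
  simp only [moment, pow_zero, one_mul]

/-- Cauchy–Schwarz for the terms `n ≥ 1`, through the discriminant of
`t ↦ ∑_{n ≥ 1} A n (t - n)²`. -/
lemma moment_one_sq_le (hA : ∀ n, 0 ≤ A n)
    (hs : ∀ k ≤ 2, Summable fun n : ℕ => (n : ℝ) ^ k * A n) :
    moment A 1 ^ 2 ≤ (moment A 0 - A 0) * moment A 2 := by
  have hquad (t : ℝ) :
      0 ≤ (moment A 0 - A 0) * (t * t) + (-2 * moment A 1) * t + moment A 2 := by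
    have hterms : (fun n : ℕ => A n * (t - n) ^ 2) = fun n : ℕ =>
        t ^ 2 * ((n : ℝ) ^ 0 * A n) - 2 * t * ((n : ℝ) ^ 1 * A n) + (n : ℝ) ^ 2 * A n :=
      funext fun n => by ring
    have hsum : HasSum (fun n : ℕ => A n * (t - n) ^ 2)
        (t ^ 2 * moment A 0 - 2 * t * moment A 1 + moment A 2) := by
      rw [hterms]
      exact (((hs 0 (by norm_num)).hasSum.mul_left (t ^ 2)).sub
        ((hs 1 (by norm_num)).hasSum.mul_left (2 * t))).add (hs 2 le_rfl).hasSum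
    have := le_hasSum hsum 0 fun n _ => mul_nonneg (hA n) (sq_nonneg _)
    simp only [Nat.cast_zero, sub_zero] at this
    linarith
  have := discrim_le_zero hquad
  unfold discrim at this
  linarith

lemma mul_le_moment_zero_mul_moment_two_sub_sq (hA : ∀ n, 0 ≤ A n)
    (hs : ∀ k ≤ 2, Summable fun n : ℕ => (n : ℝ) ^ k * A n) :
    A 0 * A 1 ≤ moment A 0 * moment A 2 - moment A 1 ^ 2 := by
  have hA1 : A 1 ≤ moment A 2 := by
    simpa [moment] using (hs 2 le_rfl).le_tsum 1 fun n _ => mul_nonneg (by positivity) (hA n)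
  nlinarith [moment_one_sq_le hA hs, hA 0]

end Moment

lemma deriv_deriv_log_of_hasDerivAt {F F' F'' : ℝ → ℝ} (hF : ∀ x, HasDerivAt F (F' x) x)
    (hF' : ∀ x, HasDerivAt F' (F'' x) x) (hpos : ∀ x, 0 < F x) (x : ℝ) :
    deriv (deriv fun y => log (F y)) x = (F'' x * F x - F' x * F' x) / F x ^ 2 := by
  have hlog : deriv (fun y => log (F y)) = fun y => F' y / F y :=
    funext fun y => ((hF y).log (hpos y).ne').deriv
  rw [hlog]
  exact ((hF' x).div (hF x) (hpos x).ne').deriv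

noncomputable def phiCoeff (υ q : ℝ) (n : ℕ) : ℝ := υ ^ n / n ! * exp (-(q * n ^ 2))

section PhiCoeff

variable {υ q : ℝ}

lemma phi_eq_log_moment (υ a x p : ℝ) :
    phi υ a x p = log (moment (expTilt (phiCoeff υ (a * p / 2)) x) 0) := by
  rw [moment_zero, phi]
  congr 1
  refine tsum_congr fun n => ?_
  rw [expTilt, phiCoeff, mul_assoc, ← exp_add]
  ring_nf

lemma phiCoeff_nonneg (hυ : 0 ≤ υ) (n : ℕ) : 0 ≤ phiCoeff υ q n := by
  unfold phiCoeff; positivity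

lemma expTilt_phiCoeff_zero (x : ℝ) : expTilt (phiCoeff υ q) x 0 = 1 := by
  simp [expTilt, phiCoeff]

lemma expTilt_phiCoeff_self_one : expTilt (phiCoeff υ q) q 1 = υ := by
  simp [expTilt, phiCoeff, mul_assoc, ← exp_add]

lemma expTilt_phiCoeff_le (hυ : 0 ≤ υ) (hq : 0 ≤ q) (x : ℝ) (n : ℕ) :
    expTilt (phiCoeff υ q) x n ≤ (υ * exp (x - q)) ^ n / n ! := by
  have hn : (n : ℝ) ≤ n ^ 2 := by exact_mod_cast Nat.le_self_pow two_ne_zero n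
  calc expTilt (phiCoeff υ q) x n = υ ^ n / n ! * exp (x * n - q * n ^ 2) := by
        rw [expTilt, phiCoeff, mul_assoc, ← exp_add]; ring_nf
    _ ≤ υ ^ n / n ! * exp ((x - q) * n) := by
        gcongr; nlinarith
    _ = (υ * exp (x - q)) ^ n / n ! := by
        rw [mul_pow, ← exp_nat_mul]; ring_nf

lemma summable_expTilt_phiCoeff (hυ : 0 ≤ υ) (hq : 0 ≤ q) (x : ℝ) :
    Summable (expTilt (phiCoeff υ q) x) :=
  (Real.summable_pow_div_factorial _).of_nonneg_of_le
    (expTilt_nonneg (phiCoeff_nonneg hυ) x) (expTilt_phiCoeff_le hυ hq x)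

lemma moment_zero_expTilt_phiCoeff_self_le (hυ : 0 ≤ υ) (hq : 0 ≤ q) :
    moment (expTilt (phiCoeff υ q) q) 0 ≤ exp υ := by
  rw [moment_zero, exp_eq_exp_ℝ, NormedSpace.exp_eq_tsum_div]
  refine (summable_expTilt_phiCoeff hυ hq q).tsum_le_tsum (fun n => ?_)
    (Real.summable_pow_div_factorial υ)
  simpa using expTilt_phiCoeff_le hυ hq q n

lemma one_le_moment_zero_expTilt_phiCoeff (hυ : 0 ≤ υ) (hq : 0 ≤ q) (x : ℝ) :
    1 ≤ moment (expTilt (phiCoeff υ q) x) 0 := by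
  rw [moment_zero, ← expTilt_phiCoeff_zero x]
  exact (summable_expTilt_phiCoeff hυ hq x).le_tsum 0
    fun n _ => expTilt_nonneg (phiCoeff_nonneg hυ) x n

end PhiCoeff

theorem le_deriv_deriv_phi {υ a p : ℝ} (hυ : 0 ≤ υ) (hap : 0 ≤ a * p) :
    υ * exp (-(2 * υ)) ≤ deriv (deriv fun x => phi υ a x p) (a * p / 2) := by
  set q := a * p / 2
  have hq : 0 ≤ q := by positivity
  set M : ℕ → ℝ → ℝ := fun k x => moment (expTilt (phiCoeff υ q) x) k
  have hc := phiCoeff_nonneg (q := q) hυ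
  have hs := summable_expTilt_phiCoeff hυ hq
  have hM0 : ∀ x, 0 < M 0 x := fun x =>
    one_pos.trans_le (one_le_moment_zero_expTilt_phiCoeff hυ hq x)
  have hvar : υ ≤ M 0 q * M 2 q - M 1 q ^ 2 := by
    simpa [expTilt_phiCoeff_zero, expTilt_phiCoeff_self_one] using
      mul_le_moment_zero_mul_moment_two_sub_sq (expTilt_nonneg hc q)
        fun k _ => summable_pow_mul_expTilt hc hs k q
  have hden : M 0 q ^ 2 ≤ exp υ ^ 2 :=
    pow_le_pow_left₀ (hM0 q).le (moment_zero_expTilt_phiCoeff_self_le hυ hq) 2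
  simp_rw [phi_eq_log_moment]
  rw [deriv_deriv_log_of_hasDerivAt (hasDerivAt_moment_expTilt hc hs 0)
    (hasDerivAt_moment_expTilt hc hs 1) hM0, exp_neg, two_mul, exp_add, ← sq, ← div_eq_mul_inv]
  exact div_le_div₀ (by nlinarith) (by nlinarith) (pow_pos (hM0 q) 2) hden

theorem stmt_19 (υ a : ℝ) (hυ : 0 < υ) (ha : 1 < a) :
    (∀ p : ℝ, 0 < p →
      p * υ * Real.exp (-(2 * υ)) ≤
        p * deriv (deriv (fun x' => phi υ a x' p)) (a * p / 2)) ∧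
    (1 ≤ υ⁻¹ * Real.exp (2 * υ) *
        deriv (deriv (fun x' => phi υ a x' (υ⁻¹ * Real.exp (2 * υ))))
          (a * (υ⁻¹ * Real.exp (2 * υ)) / 2)) ∧
    (∀ p : ℝ, υ⁻¹ * Real.exp (2 * υ) < p →
      1 < p * deriv (deriv (fun x' => phi υ a x' p)) (a * p / 2)) := by
  have hp₁ : 0 < υ⁻¹ * exp (2 * υ) := by positivity
  have hp₁_mul : υ⁻¹ * exp (2 * υ) * (υ * exp (-(2 * υ))) = 1 := by
    rw [exp_neg]; field_simp
  have hbound (p : ℝ) (hp : 0 < p) :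
      p * (υ * exp (-(2 * υ))) ≤ p * deriv (deriv fun x => phi υ a x p) (a * p / 2) :=
    mul_le_mul_of_nonneg_left (le_deriv_deriv_phi hυ.le (mul_pos (one_pos.trans ha) hp).le) hp.le
  refine ⟨fun p hp => (mul_assoc p υ _).le.trans (hbound p hp),
    hp₁_mul.symm.le.trans (hbound _ hp₁), fun p hp => ?_⟩
  calc 1 = υ⁻¹ * exp (2 * υ) * (υ * exp (-(2 * υ))) := hp₁_mul.symm
    _ < p * (υ * exp (-(2 * υ))) := mul_lt_mul_of_pos_right hp (by positivity)
    _ ≤ _ := hbound p (hp₁.trans hp)
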